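/- The 'pseudo-translation' of LPODs into extended logic programs fails to preserve preferred answer sets: for the LPOD P = { a × b, p ← not p, a }, P has the unique preferred answer set {b}, but the translated program { a ← not ¬a; b ← ¬a; p ← not p, a } has no consistent answer set. -/

import Mathlib

/-!
The LPOD has two split programs. Choosing `a` makes `a` a fact, and then `p ← not p, a`,
whose head has no other support, acts as the constraint `← a`, so there is no answer set.
Choosing `b` gives `b ← not a`, whose only consistent answer set is `{b}`; being the unique
answer set of the LPOD, it is preferred. In the translation no rule derives `¬a`, so
`a ← not ¬a` forces `a`, and the same constraint excludes every consistent answer set.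
-/

namespace LPOD

/-- An LPOD rule `C₁ × … × Cₙ ← A₁,…,Aₘ, not B₁,…, not Bₖ`:
`head` is the ordered list of choices, `pos` the positive body literals,
`neg` the default-negated body literals. -/
structure Rule (L : Type) where
  head : List L
  pos  : List L
  neg  : List L

/-- `S` satisfies the body of `r`. -/
def bodySat {L : Type} (S : Set L) (r : Rule L) : Prop :=
  (∀ a ∈ r.pos, a ∈ S) ∧ (∀ b ∈ r.neg, b ∉ S)

/-- `S` satisfies rule `r` to degree `d` (1-based): degree 1 if the body fails,
otherwise the minimal index of a head choice belonging to `S`. -/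
def satDeg {L : Type} (S : Set L) (r : Rule L) (d : ℕ) : Prop :=
  (¬ bodySat S r ∧ d = 1) ∨
  (bodySat S r ∧ 1 ≤ d ∧
    (∃ c, r.head[d - 1]? = some c ∧ c ∈ S) ∧
    (∀ i < d - 1, ∀ c, r.head[i]? = some c → c ∉ S))

/-- The `k`-th option (1-based) of rule `r`:
`Cₖ ← body, not C₁, …, not C_{k−1}`. -/
def ruleOption {L : Type} (r : Rule L) (k : ℕ) : Rule L :=
  { head := (r.head[k - 1]?).toList
    pos  := r.pos
    neg  := r.neg ++ r.head.take (k - 1) }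

/-- `P'` is a split program of `P`: each rule of `P` is replaced by one of its options. -/
def isSplit {L : Type} (P P' : List (Rule L)) : Prop :=
  P'.length = P.length ∧
  ∀ i r, P[(i : ℕ)]? = some r →
    ∃ k, 1 ≤ k ∧ k ≤ r.head.length ∧ P'[i]? = some (ruleOption r k)

/-- `T` is closed under the `S`-reduct of `P` (Gelfond–Lifschitz). -/
def reductClosed {L : Type} (P : List (Rule L)) (S T : Set L) : Prop :=
  ∀ r ∈ P, (∀ b ∈ r.neg, b ∉ S) → (∀ a ∈ r.pos, a ∈ T) → ∃ c ∈ r.head, c ∈ T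

/-- Literals are `(true, a)` (the atom `a`) and `(false, a)` (its strong negation `¬a`). -/
def consistent {A : Type} (S : Set (Bool × A)) : Prop :=
  ¬ ∃ a, (true, a) ∈ S ∧ (false, a) ∈ S

/-- Logically closed: consistent, or the set of all literals. -/
def logClosed {A : Type} (S : Set (Bool × A)) : Prop :=
  consistent S ∨ S = Set.univ

/-- `S` is an answer set of the ordered-disjunction-free program `P`:
a minimal logically closed set closed under the `S`-reduct of `P`. -/
def answerSet {A : Type} (P : List (Rule (Bool × A))) (S : Set (Bool × A)) : Prop :=
  logClosed S ∧ reductClosed P S S ∧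
  ∀ T, T ⊆ S → logClosed T → reductClosed P S T → T = S

/-- `S` is an answer set of the LPOD `P`: a consistent answer set of some split program. -/
def lpodAS {A : Type} (P : List (Rule (Bool × A))) (S : Set (Bool × A)) : Prop :=
  ∃ P', isSplit P P' ∧ answerSet P' S ∧ consistent S

/-- `Sⁱ(P)`: the rules of `P` satisfied by `S` to degree `i`. -/
def degSet {L : Type} (S : Set L) (P : List (Rule L)) (i : ℕ) : Set (Rule L) :=
  {r | r ∈ P ∧ satDeg S r i}

/-- `S₁ > S₂`: for some degree `i`, `S₂ⁱ(P) ⊊ S₁ⁱ(P)` and `S₁ʲ(P) = S₂ʲ(P)` for all `j < i`. -/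
def pref {L : Type} (P : List (Rule L)) (S₁ S₂ : Set L) : Prop :=
  ∃ i, 1 ≤ i ∧ degSet S₂ P i ⊂ degSet S₁ P i ∧
    ∀ j < i, degSet S₁ P j = degSet S₂ P j

/-- Preferred answer sets: answer sets not beaten by any answer set. -/
def preferredAS {A : Type} (P : List (Rule (Bool × A))) (S : Set (Bool × A)) : Prop :=
  lpodAS P S ∧ ¬ ∃ S', lpodAS P S' ∧ pref P S' S

end LPOD

open LPOD

namespace Stmt13

def a : Bool × Fin 3 := (true, 0)
def na : Bool × Fin 3 := (false, 0)
def b : Bool × Fin 3 := (true, 1)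
def p : Bool × Fin 3 := (true, 2)

/-- the LPOD  a × b ;  p ← not p, a -/
def P : List (Rule (Bool × Fin 3)) :=
  [⟨[a, b], [], []⟩, ⟨[p], [a], [p]⟩]

/-- its pseudo-translation  a ← not ¬a ;  b ← ¬a ;  p ← not p, a -/
def T : List (Rule (Bool × Fin 3)) :=
  [⟨[a], [], [na]⟩, ⟨[b], [na], []⟩, ⟨[p], [a], [p]⟩]

end Stmt13

namespace LPOD

variable {L A : Type}

theorem isSplit_iff_forall₂ {P P' : List (Rule L)} :
    isSplit P P' ↔
      List.Forall₂ (fun r r' => ∃ k, 1 ≤ k ∧ k ≤ r.head.length ∧ r' = ruleOption r k) P P' := by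
  rw [List.forall₂_iff_get, isSplit, eq_comm]
  refine and_congr_right fun hlen => ⟨fun h i h₁ h₂ => ?_, fun h i r hr => ?_⟩
  · obtain ⟨k, hk₁, hk₂, hk⟩ := h i _ (List.getElem?_eq_getElem h₁)
    exact ⟨k, hk₁, hk₂, by simpa [List.getElem?_eq_getElem h₂] using hk⟩
  · obtain ⟨h₁, rfl⟩ := List.getElem?_eq_some_iff.1 hr
    obtain ⟨k, hk₁, hk₂, hk⟩ := h i h₁ (hlen ▸ h₁)
    exact ⟨k, hk₁, hk₂, by simpa [List.getElem?_eq_getElem (hlen ▸ h₁)] using hk⟩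

theorem pref_irrefl (P : List (Rule L)) (S : Set L) : ¬ pref P S S :=
  fun ⟨_, _, hlt, _⟩ => hlt.ne rfl

theorem preferredAS_iff_of_lpodAS_iff {P : List (Rule (Bool × A))} {S₀ : Set (Bool × A)}
    (h : ∀ S, lpodAS P S ↔ S = S₀) (S : Set (Bool × A)) : preferredAS P S ↔ S = S₀ := by
  refine ⟨fun hS => (h S).1 hS.1, ?_⟩
  rintro rfl
  refine ⟨(h S).2 rfl, ?_⟩
  rintro ⟨S', hS', hpref⟩
  rw [(h S').1 hS'] at hpref
  exact pref_irrefl P S hpref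

theorem consistent_singleton (l : Bool × A) : consistent ({l} : Set (Bool × A)) := by
  rintro ⟨x, h₁, h₂⟩
  simp only [Set.mem_singleton_iff] at h₁ h₂
  simp [← h₂] at h₁

theorem consistent.mono {S T : Set (Bool × A)} (hST : T ⊆ S) (hS : consistent S) :
    consistent T :=
  fun ⟨x, h₁, h₂⟩ => hS ⟨x, hST h₁, hST h₂⟩

section AnswerSet

variable {P : List (Rule (Bool × A))} {S : Set (Bool × A)}

theorem answerSet.mem_of_bodySat {l : Bool × A} {pos neg : List (Bool × A)}
    (hS : answerSet P S) (hr : ⟨[l], pos, neg⟩ ∈ P) (hbody : bodySat S ⟨[l], pos, neg⟩) :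
    l ∈ S := by
  simpa using hS.2.1 _ hr hbody.2 hbody.1

/-- Supportedness: removing an unsupported literal from `S` would leave a smaller closed set. -/
theorem answerSet.exists_support (hS : answerSet P S) (hc : consistent S) {l : Bool × A}
    (hl : l ∈ S) : ∃ r ∈ P, l ∈ r.head ∧ bodySat S r := by
  by_contra! hno
  have hclosed : reductClosed P S (S \ {l}) := by
    intro r hr hneg hpos
    have hbody : bodySat S r := ⟨fun x hx => (hpos x hx).1, hneg⟩
    obtain ⟨c, hc, hcS⟩ := hS.2.1 r hr hneg fun x hx => (hpos x hx).1
    exact ⟨c, hc, hcS, fun hcl => hno r hr (Set.mem_singleton_iff.1 hcl ▸ hc) hbody⟩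
  have := hS.2.2 _ Set.sdiff_subset (Or.inl (hc.mono Set.sdiff_subset)) hclosed
  exact (this ▸ hl).2 rfl

theorem answerSet.notMem_of_forall_notMem_head (hS : answerSet P S) (hc : consistent S)
    {l : Bool × A} (h : ∀ r ∈ P, l ∉ r.head) : l ∉ S := fun hl =>
  let ⟨r, hr, hlr, _⟩ := hS.exists_support hc hl
  h r hr hlr

/-- A rule `q ← pos, not q`, where `q` is derived by no rule without `not q` in its body,
acts as the constraint `← pos`. -/
theorem answerSet.exists_pos_notMem_of_odd_loop (hS : answerSet P S) (hc : consistent S)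
    {q : Bool × A} {pos : List (Bool × A)} (hr : ⟨[q], pos, [q]⟩ ∈ P)
    (hq : ∀ r ∈ P, q ∈ r.head → q ∈ r.neg) : ∃ x ∈ pos, x ∉ S := by
  by_contra! hpos
  have hqS : q ∈ S := by
    by_contra hqS
    exact hqS (hS.mem_of_bodySat hr ⟨hpos, by simpa using hqS⟩)
  obtain ⟨r, hr, hqr, -, hneg⟩ := hS.exists_support hc hqS
  exact hneg q (hq r hr hqr) hqS

end AnswerSet

end LPOD

namespace Stmt13

def Pa : List (Rule (Bool × Fin 3)) := [⟨[a], [], []⟩, ⟨[p], [a], [p]⟩]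

def Pb : List (Rule (Bool × Fin 3)) := [⟨[b], [], [a]⟩, ⟨[p], [a], [p]⟩]

theorem isSplit_P_iff {P' : List (Rule (Bool × Fin 3))} : isSplit P P' ↔ P' = Pa ∨ P' = Pb := by
  rw [isSplit_iff_forall₂]
  constructor
  · rintro (_ | ⟨⟨k, hk₁, hk₂, rfl⟩, _ | ⟨⟨k', hk₁', hk₂', rfl⟩, _ | _⟩⟩)
    simp only [List.length_cons, List.length_nil] at hk₂ hk₂'
    interval_cases k <;> interval_cases k'
    exacts [Or.inl rfl, Or.inr rfl]
  · rintro (rfl | rfl)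
    · exact .cons ⟨1, le_rfl, by simp, rfl⟩ (.cons ⟨1, le_rfl, le_rfl, rfl⟩ .nil)
    · exact .cons ⟨2, by simp, le_rfl, rfl⟩ (.cons ⟨1, le_rfl, le_rfl, rfl⟩ .nil)

section

variable {Q : List (Rule (Bool × Fin 3))} {S : Set (Bool × Fin 3)}

theorem a_notMem_of_odd_loop (hS : answerSet Q S) (hc : consistent S)
    (hQ : ⟨[p], [a], [p]⟩ ∈ Q) (hp : ∀ r ∈ Q, p ∈ r.head → p ∈ r.neg) : a ∉ S := by
  obtain ⟨x, hx, hxS⟩ := hS.exists_pos_notMem_of_odd_loop hc hQ hp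
  rwa [List.mem_singleton.1 hx] at hxS

theorem not_answerSet_Pa (hS : answerSet Pa S) (hc : consistent S) : False :=
  a_notMem_of_odd_loop hS hc (by simp [Pa]) (by simp [Pa, a, p])
    (hS.mem_of_bodySat (pos := []) (neg := []) (by simp [Pa]) ⟨by simp, by simp⟩)

theorem eq_singleton_b_of_answerSet_Pb (hS : answerSet Pb S) (hc : consistent S) :
    S = {b} := by
  have ha : a ∉ S := hS.notMem_of_forall_notMem_head hc (by simp [Pb, a, b, p])
  have hb : b ∈ S :=
    hS.mem_of_bodySat (pos := []) (neg := [a]) (by simp [Pb]) ⟨by simp, by simpa using ha⟩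
  refine Set.Subset.antisymm (fun l hl => ?_) (Set.singleton_subset_iff.2 hb)
  obtain ⟨r, hr, hlr, hpos, -⟩ := hS.exists_support hc hl
  simp only [Pb, List.mem_cons, List.not_mem_nil, or_false] at hr
  rcases hr with rfl | rfl
  · simpa using hlr
  · exact absurd (hpos a (by simp)) ha

theorem answerSet_Pb_singleton_b : answerSet Pb {b} := by
  have ha : a ∉ ({b} : Set (Bool × Fin 3)) := by simp [a, b]
  refine ⟨Or.inl (consistent_singleton b), ?_, fun U hU _ hclosed => ?_⟩
  · intro r hr _ hpos
    simp only [Pb, List.mem_cons, List.not_mem_nil, or_false] at hr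
    rcases hr with rfl | rfl
    · exact ⟨b, by simp, rfl⟩
    · exact absurd (hpos a (by simp)) ha
  · obtain ⟨c, hc, hcU⟩ := hclosed ⟨[b], [], [a]⟩ (by simp [Pb]) (by simpa using ha) (by simp)
    rw [List.mem_singleton.1 hc] at hcU
    exact Set.Subset.antisymm hU (Set.singleton_subset_iff.2 hcU)

end

theorem lpodAS_P_iff (S : Set (Bool × Fin 3)) : lpodAS P S ↔ S = {b} := by
  constructor
  · rintro ⟨P', hsplit, hS, hc⟩
    rcases isSplit_P_iff.1 hsplit with rfl | rfl
    · exact (not_answerSet_Pa hS hc).elim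
    · exact eq_singleton_b_of_answerSet_Pb hS hc
  · rintro rfl
    exact ⟨Pb, isSplit_P_iff.2 (Or.inr rfl), answerSet_Pb_singleton_b, consistent_singleton b⟩

theorem not_answerSet_T {S : Set (Bool × Fin 3)} (hS : answerSet T S) (hc : consistent S) :
    False := by
  have hna : na ∉ S := hS.notMem_of_forall_notMem_head hc (by simp [T, na, a, b, p])
  exact a_notMem_of_odd_loop hS hc (by simp [T]) (by simp [T, a, b, p])
    (hS.mem_of_bodySat (pos := []) (neg := [na]) (by simp [T]) ⟨by simp, by simpa using hna⟩)

/-- the pseudo-translation fails: P has the unique preferred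
answer set {b}, but the translated program has no consistent answer set. -/
theorem pseudo_translation_fails :
    (∀ S : Set (Bool × Fin 3), preferredAS P S ↔ S = {b}) ∧
    ¬ ∃ S : Set (Bool × Fin 3), answerSet T S ∧ consistent S :=
  ⟨preferredAS_iff_of_lpodAS_iff lpodAS_P_iff, fun ⟨_, hS, hc⟩ => not_answerSet_T hS hc⟩

end Stmt13
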